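/- arXiv:2011.00588 — 3 statements merged into one kernel-verified Lean document; each statement's English description precedes it below -/
import Mathlib

section
/- Let M and N be compact metric spaces and let R ⊆ M × N be a relation whose closure R̄ restricted to D_M × D_N is a correlation (total surjective relation) for some dense subsets D_M ⊆ M, D_N ⊆ N. Then the closure R̄ of R in M × N is a correlation between M and N. -/
theorem closure_of_almost_correlation_is_correlation
    {M N : Type*} [MetricSpace M] [MetricSpace N]
    [CompactSpace M] [CompactSpace N]
    (R : Set (M × N)) (DM : Set M) (DN : Set N)
    (hDM : Dense DM) (hDN : Dense DN)
    (htot : ∀ m ∈ DM, ∃ n ∈ DN, (m, n) ∈ closure R)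
    (hsurj : ∀ n ∈ DN, ∃ m ∈ DM, (m, n) ∈ closure R) :
    (∀ m : M, ∃ n : N, (m, n) ∈ closure R) ∧
    (∀ n : N, ∃ m : M, (m, n) ∈ closure R) := by
  constructor
  · have hclosed : IsClosed (Prod.fst '' closure R) :=
      isClosedMap_fst_of_compactSpace _ isClosed_closure
    have hsub : DM ⊆ Prod.fst '' closure R := by
      intro m hm
      obtain ⟨n, _, hn⟩ := htot m hm
      exact ⟨(m, n), hn, rfl⟩
    have : Prod.fst '' closure R = Set.univ := by
      have := hDM.mono hsub
      rw [← hclosed.closure_eq]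
      exact this.closure_eq
    intro m
    have hm : m ∈ Prod.fst '' closure R := this ▸ Set.mem_univ m
    obtain ⟨⟨m', n⟩, hmn, h⟩ := hm
    exact ⟨n, h ▸ hmn⟩
  · have hclosed : IsClosed (Prod.snd '' closure R) :=
      isClosedMap_snd_of_compactSpace _ isClosed_closure
    have hsub : DN ⊆ Prod.snd '' closure R := by
      intro n hn
      obtain ⟨m, _, hm⟩ := hsurj n hn
      exact ⟨(m, n), hm, rfl⟩
    have : Prod.snd '' closure R = Set.univ := by
      have := hDN.mono hsub
      rw [← hclosed.closure_eq]
      exact this.closure_eq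
    intro n
    have hn : n ∈ Prod.snd '' closure R := this ▸ Set.mem_univ n
    obtain ⟨⟨m, n'⟩, hmn, h⟩ := hn
    exact ⟨m, h ▸ hmn⟩
end

section
/- Let (X_i, d_i) for i < ω be a sequence of metric spaces and suppose for each i there is a correlation R_i between X_i and X_{i+1} with metric distortion dis(R_i) = sup_{(a,b),(a',b')∈R_i} |d_i(a,a') − d_{i+1}(b,b')| < 2^{-i}. Let X_ω = { x ∈ Π_i X_i : ∀ i, (x(i), x(i+1)) ∈ R_i }, and define d_ω(x,y) = lim_{i→∞} d_i(x(i), y(i)). Then for all x, y ∈ X_ω the limit defining d_ω(x,y) exists, and d_ω is a pseudometric on X_ω. -/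
open Filter Topology

theorem limit_structure_pseudometric
    (X : ℕ → Type*) [∀ i, MetricSpace (X i)]
    (R : ∀ i, Set (X i × X (i + 1)))
    (htot : ∀ i, ∀ a : X i, ∃ b : X (i + 1), (a, b) ∈ R i)
    (hsurj : ∀ i, ∀ b : X (i + 1), ∃ a : X i, (a, b) ∈ R i)
    (hdis : ∀ i, ∀ p q, p ∈ R i → q ∈ R i →
      |dist p.1 q.1 - dist p.2 q.2| < (2 : ℝ)⁻¹ ^ i) :
    ∃ dω : {x : ∀ i, X i // ∀ i, (x i, x (i + 1)) ∈ R i} →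
        {x : ∀ i, X i // ∀ i, (x i, x (i + 1)) ∈ R i} → ℝ,
      (∀ x y, Tendsto (fun i => dist (x.1 i) (y.1 i)) atTop (𝓝 (dω x y))) ∧
      (∀ x, dω x x = 0) ∧
      (∀ x y, dω x y = dω y x) ∧
      (∀ x y z, dω x z ≤ dω x y + dω y z) := by
  have hcau : ∀ x y : {x : ∀ i, X i // ∀ i, (x i, x (i + 1)) ∈ R i},
      CauchySeq (fun i => dist (x.1 i) (y.1 i)) := by
    intro x y
    apply cauchySeq_of_le_geometric (2 : ℝ)⁻¹ 1 (by norm_num)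
    intro n
    have := hdis n (x.1 n, x.1 (n+1)) (y.1 n, y.1 (n+1)) (x.2 n) (y.2 n)
    rw [Real.dist_eq]
    simp only at this
    linarith [le_of_lt this, (one_mul ((2:ℝ)⁻¹ ^ n)).symm]
  have hlim : ∀ x y : {x : ∀ i, X i // ∀ i, (x i, x (i + 1)) ∈ R i},
      ∃ l, Tendsto (fun i => dist (x.1 i) (y.1 i)) atTop (𝓝 l) :=
    fun x y => cauchySeq_tendsto_of_complete (hcau x y)
  refine ⟨fun x y => (hlim x y).choose, fun x y => (hlim x y).choose_spec, ?_, ?_, ?_⟩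
  · intro x
    show (hlim x x).choose = 0
    have h0 : Tendsto (fun i => dist (x.1 i) (x.1 i)) atTop (𝓝 0) := by
      simpa using (tendsto_const_nhds : Tendsto (fun _ : ℕ => (0:ℝ)) atTop (𝓝 0))
    exact tendsto_nhds_unique (hlim x x).choose_spec h0
  · intro x y
    show (hlim x y).choose = (hlim y x).choose
    have h : Tendsto (fun i => dist (x.1 i) (y.1 i)) atTop (𝓝 (hlim y x).choose) := by
      simpa [dist_comm] using (hlim y x).choose_spec
    exact tendsto_nhds_unique (hlim x y).choose_spec h
  · intro x y z
    refine le_of_tendsto_of_tendsto (hlim x z).choose_spec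
      ((hlim x y).choose_spec.add (hlim y z).choose_spec) ?_
    filter_upwards with i using dist_triangle _ _ _
end

section
/- Let (X, d, τ) be a compact topometric space, i.e., X is a compact topological space and d is a metric on X refining the topology such that d is lower semi-continuous as a function on X × X. Then d(x,y) = sup { |f(x) − f(y)| : f : X → ℝ continuous and 1-Lipschitz with respect to d }. -/
open Set

namespace TopometricAux

variable {X : Type*} [TopologicalSpace X] [CompactSpace X] [T2Space X]

lemma isClosed_le_d {d : X → X → ℝ}
    (hlsc : LowerSemicontinuous (fun p : X × X => d p.1 p.2)) (ρ : ℝ) :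
    IsClosed {p : X × X | d p.1 p.2 ≤ ρ} := by
  have h := (hlsc.isOpen_preimage ρ).isClosed_compl
  have heq : {p : X × X | d p.1 p.2 ≤ ρ} = ((fun p : X × X => d p.1 p.2) ⁻¹' Ioi ρ)ᶜ := by
    ext p; simp [not_lt]
  rw [heq]; exact h

/-- The "closed ball around a closed set" is closed (projection of a compact set). -/
lemma isClosed_ballL {d : X → X → ℝ}
    (hlsc : LowerSemicontinuous (fun p : X × X => d p.1 p.2))
    {A : Set X} (hA : IsClosed A) (ρ : ℝ) :
    IsClosed {z : X | ∃ a ∈ A, d a z ≤ ρ} := by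
  have hK : IsCompact {p : X × X | p.1 ∈ A ∧ d p.1 p.2 ≤ ρ} :=
    ((hA.preimage continuous_fst).inter (isClosed_le_d hlsc ρ)).isCompact
  have himg : {z : X | ∃ a ∈ A, d a z ≤ ρ}
      = Prod.snd '' {p : X × X | p.1 ∈ A ∧ d p.1 p.2 ≤ ρ} := by
    ext z
    constructor
    · rintro ⟨a, ha, hd⟩
      exact ⟨(a, z), ⟨ha, hd⟩, rfl⟩
    · rintro ⟨⟨a, w⟩, ⟨ha, hd⟩, rfl⟩
      exact ⟨a, ha, hd⟩
  rw [himg]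
  exact (hK.image continuous_snd).isClosed

lemma isClosed_ballR {d : X → X → ℝ}
    (hlsc : LowerSemicontinuous (fun p : X × X => d p.1 p.2))
    {B : Set X} (hB : IsClosed B) (ρ : ℝ) :
    IsClosed {z : X | ∃ b ∈ B, d z b ≤ ρ} := by
  have hK : IsCompact {p : X × X | p.2 ∈ B ∧ d p.1 p.2 ≤ ρ} :=
    ((hB.preimage continuous_snd).inter (isClosed_le_d hlsc ρ)).isCompact
  have himg : {z : X | ∃ b ∈ B, d z b ≤ ρ}
      = Prod.fst '' {p : X × X | p.2 ∈ B ∧ d p.1 p.2 ≤ ρ} := by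
    ext z
    constructor
    · rintro ⟨b, hb, hd⟩
      exact ⟨(z, b), ⟨hb, hd⟩, rfl⟩
    · rintro ⟨⟨w, b⟩, ⟨hb, hd⟩, rfl⟩
      exact ⟨b, hb, hd⟩
  rw [himg]
  exact (hK.image continuous_fst).isClosed

/-- A chain of open sets at levels `t i`, with metric separation invariant. -/
def Chain (d : X → X → ℝ) (x y : X) (r : ℝ) (t : ℕ → ℝ) (n : ℕ)
    (v : Fin n → Set X) : Prop :=
  (∀ i, IsOpen (v i)) ∧ (∀ i, x ∈ v i) ∧ (∀ i, y ∉ v i) ∧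
  (∀ i j : Fin n, t i.1 < t j.1 → closure (v i) ⊆ v j) ∧
  (∀ i j : Fin n, t i.1 < t j.1 → ∀ a ∈ closure (v i), ∀ b, b ∉ v j →
    r * (t j.1 - t i.1) < d a b)

lemma chain_base (d : X → X → ℝ) (x y : X) (r : ℝ) (t : ℕ → ℝ)
    (hrefl : ∀ a, d a a = 0)
    (hlsc : LowerSemicontinuous (fun p : X × X => d p.1 p.2))
    (hr0 : 0 < r) (hrd : r < d x y)
    (ht0 : t 0 = 0) (ht1 : t 1 = 1) :
    ∃ v : Fin 2 → Set X, Chain d x y r t 2 v := by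
  classical
  -- K := closed ball around x of radius r
  set K : Set X := {z : X | ∃ a ∈ ({x} : Set X), d a z ≤ r} with hKdef
  have hKclosed : IsClosed K := isClosed_ballL hlsc isClosed_singleton r
  have hxK : x ∈ K := ⟨x, rfl, by rw [hrefl]; linarith⟩
  have hyK : y ∉ K := by
    rintro ⟨a, rfl, hd⟩
    · linarith
  -- U1 : open around K avoiding y
  obtain ⟨U1, V1, hU1, hV1, hKU1, hyV1, hUV1⟩ :=
    normal_separation hKclosed isClosed_singleton
      (disjoint_singleton_right.2 hyK)
  have hyU1 : y ∉ U1 := fun h =>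
    (disjoint_left.1 hUV1) h (hyV1 rfl)
  -- P0 and U0
  set P0 : Set X := {z : X | ∃ b ∈ U1ᶜ, d z b ≤ r} ∪ U1ᶜ with hP0def
  have hP0closed : IsClosed P0 :=
    (isClosed_ballR hlsc hU1.isClosed_compl r).union hU1.isClosed_compl
  have hxP0 : x ∉ P0 := by
    rintro (⟨b, hb, hd⟩ | hx)
    · exact hb (hKU1 ⟨x, rfl, hd⟩)
    · exact hx (hKU1 hxK)
  obtain ⟨U0, V0, hU0, hV0, hxU0, hP0V0, hUV0⟩ :=
    normal_separation isClosed_singleton hP0closed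
      (by simpa [disjoint_singleton_left] using hxP0)
  have hclU0 : closure U0 ⊆ P0ᶜ := by
    have h1 : U0 ⊆ V0ᶜ := fun z hz hz' => (disjoint_left.1 hUV0) hz hz'
    have h2 : closure U0 ⊆ V0ᶜ := closure_minimal h1 hV0.isClosed_compl
    exact fun z hz hzP => (h2 hz) (hP0V0 hzP)
  refine ⟨![U0, U1], ?_, ?_, ?_, ?_, ?_⟩
  · intro i; fin_cases i
    · exact hU0
    · exact hU1
  · intro i; fin_cases i
    · exact hxU0 rfl
    · exact hKU1 hxK
  · intro i; fin_cases i
    · intro hy0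
      have : y ∈ P0 := Or.inr hyU1
      exact (hclU0 (subset_closure hy0)) this
    · exact hyU1
  · intro i j hij
    fin_cases i <;> fin_cases j <;>
      simp only [Fin.val_zero, Fin.val_one, ht0, ht1, Fin.isValue, Matrix.cons_val_zero,
        Matrix.cons_val_one, Matrix.head_cons] at hij ⊢
    · exact absurd hij (lt_irrefl _)
    · -- closure U0 ⊆ U1
      intro z hz
      by_contra hz1
      exact (hclU0 hz) (Or.inr hz1)
    · norm_num at hij
    · exact absurd hij (lt_irrefl _)
  · intro i j hij
    fin_cases i <;> fin_cases j <;>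
      simp only [Fin.val_zero, Fin.val_one, ht0, ht1, Fin.isValue, Matrix.cons_val_zero,
        Matrix.cons_val_one, Matrix.head_cons] at hij ⊢
    · exact absurd hij (lt_irrefl _)
    · -- separation
      intro a ha b hb
      have haP : a ∉ P0 := hclU0 ha
      have hnd : ¬ (d a b ≤ r) := fun h => haP (Or.inl ⟨b, hb, h⟩)
      push_neg at hnd
      linarith
    · norm_num at hij
    · exact absurd hij (lt_irrefl _)

lemma chain_extend (d : X → X → ℝ) (x y : X) (r : ℝ) (t : ℕ → ℝ)
    (hrefl : ∀ a, d a a = 0)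
    (htri : ∀ a b c, d a c ≤ d a b + d b c)
    (hd0 : ∀ a b, 0 ≤ d a b)
    (hlsc : LowerSemicontinuous (fun p : X × X => d p.1 p.2))
    (hr0 : 0 < r)
    (ht0 : t 0 = 0) (ht1 : t 1 = 1)
    (n : ℕ) (hn : 2 ≤ n) (htn0 : 0 < t n) (htn1 : t n < 1)
    (v : Fin n → Set X) (hv : Chain d x y r t n v) :
    ∃ M : Set X, Chain d x y r t (n + 1) (Fin.snoc v M) := by
  classical
  obtain ⟨hvo, hvx, hvy, hvT, hvM⟩ := hv
  set m : ℝ := t n with hm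
  -- the lower closed set
  set C : Set X := ⋃ i : Fin n, {z : X | ∃ a ∈ closure (v i), d a z ≤ r * (m - t i.1)}
    with hCdef
  have hCclosed : IsClosed C :=
    isClosed_iUnion_of_finite fun i => isClosed_ballL hlsc isClosed_closure _
  -- the upper closed set
  set P : Set X := ⋃ j : {j : Fin n // m < t j.1},
      ({z : X | ∃ b ∈ (v j.1)ᶜ, d z b ≤ r * (t j.1.1 - m)} ∪ (v j.1)ᶜ) with hPdef
  have hPclosed : IsClosed P :=
    isClosed_iUnion_of_finite fun j =>
      (isClosed_ballR hlsc (hvo j.1).isClosed_compl _).union (hvo j.1).isClosed_compl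
  have hdisj : Disjoint C P := by
    rw [disjoint_left]
    rintro z hzC hzP
    simp only [hCdef, mem_iUnion, mem_setOf_eq] at hzC
    obtain ⟨i, a, ha, haz⟩ := hzC
    have htim : t i.1 ≤ m := by
      by_contra h
      push_neg at h
      have : r * (m - t i.1) < 0 := by nlinarith
      linarith [hd0 a z]
    simp only [hPdef, mem_iUnion, mem_union, mem_setOf_eq] at hzP
    obtain ⟨⟨j, hjm⟩, hj⟩ := hzP
    have htij : t i.1 < t j.1 := lt_of_le_of_lt htim hjm
    rcases hj with ⟨b, hb, hzb⟩ | hzj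
    · have hM := hvM i j htij a ha b hb
      have htr := htri a z b
      nlinarith
    · have hM := hvM i j htij a ha z hzj
      nlinarith
  obtain ⟨U, V, hU, hV, hCU, hPV, hUV⟩ := normal_separation hCclosed hPclosed hdisj
  have hclU : closure U ⊆ Pᶜ := by
    have h1 : U ⊆ Vᶜ := fun z hz hz' => (disjoint_left.1 hUV) hz hz'
    have h2 : closure U ⊆ Vᶜ := closure_minimal h1 hV.isClosed_compl
    exact fun z hz hzP => (h2 hz) (hPV hzP)
  -- basic membership facts
  have hsubC : ∀ i : Fin n, t i.1 < m → closure (v i) ⊆ C := by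
    intro i hi z hz
    simp only [hCdef, mem_iUnion, mem_setOf_eq]
    exact ⟨i, z, hz, by rw [hrefl]; nlinarith⟩
  have hxC : x ∈ C := by
    have h : t (⟨0, by omega⟩ : Fin n).1 < m := by
      show t 0 < m
      rw [ht0]; exact htn0
    exact hsubC ⟨0, by omega⟩ h (subset_closure (hvx _))
  have hyP : y ∈ P := by
    simp only [hPdef, mem_iUnion, mem_union, mem_setOf_eq]
    refine ⟨⟨⟨1, by omega⟩, ?_⟩, Or.inr (hvy _)⟩
    simpa [ht1] using htn1
  have hyU : y ∉ U := fun h => (disjoint_left.1 hUV) h (hPV hyP)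
  refine ⟨U, ?_, ?_, ?_, ?_, ?_⟩
  · intro i
    induction i using Fin.lastCases with
    | last => simpa [Fin.snoc_last] using hU
    | cast i => simpa [Fin.snoc_castSucc] using hvo i
  · intro i
    induction i using Fin.lastCases with
    | last => simpa [Fin.snoc_last] using hCU hxC
    | cast i => simpa [Fin.snoc_castSucc] using hvx i
  · intro i
    induction i using Fin.lastCases with
    | last => simpa [Fin.snoc_last] using hyU
    | cast i => simpa [Fin.snoc_castSucc] using hvy i
  · intro i j hij
    induction i using Fin.lastCases with
    | last =>
      induction j using Fin.lastCases with
      | last => simp at hij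
      | cast j =>
        -- closure U ⊆ v j, with m < t j
        have hmj : m < t j.1 := by simpa using hij
        simp only [Fin.snoc_last, Fin.snoc_castSucc]
        intro z hz
        have hzP : z ∉ P := hclU hz
        by_contra hzv
        apply hzP
        simp only [hPdef, mem_iUnion, mem_union, mem_setOf_eq]
        exact ⟨⟨j, hmj⟩, Or.inr hzv⟩
    | cast i =>
      induction j using Fin.lastCases with
      | last =>
        have him : t i.1 < m := by simpa using hij
        simp only [Fin.snoc_last, Fin.snoc_castSucc]
        exact (hsubC i him).trans hCU
      | cast j =>
        have h : t i.1 < t j.1 := by simpa using hij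
        simp only [Fin.snoc_castSucc]
        exact hvT i j h
  · intro i j hij
    induction i using Fin.lastCases with
    | last =>
      induction j using Fin.lastCases with
      | last => simp at hij
      | cast j =>
        have hmj : m < t j.1 := by simpa using hij
        simp only [Fin.snoc_last, Fin.snoc_castSucc, Fin.coe_castSucc, Fin.val_last]
        intro a ha b hb
        have haP : a ∉ P := hclU ha
        have : ¬ (d a b ≤ r * (t j.1 - m)) := by
          intro h
          apply haP
          simp only [hPdef, mem_iUnion, mem_union, mem_setOf_eq]
          exact ⟨⟨j, hmj⟩, Or.inl ⟨b, hb, h⟩⟩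
        push_neg at this
        simpa using this
    | cast i =>
      induction j using Fin.lastCases with
      | last =>
        have him : t i.1 < m := by simpa using hij
        simp only [Fin.snoc_last, Fin.snoc_castSucc, Fin.coe_castSucc, Fin.val_last]
        intro a ha b hb
        have hbC : b ∉ C := fun h => hb (hCU h)
        have : ¬ (d a b ≤ r * (m - t i.1)) := by
          intro h
          apply hbC
          simp only [hCdef, mem_iUnion, mem_setOf_eq]
          exact ⟨i, a, ha, h⟩
        push_neg at this
        simpa using this
      | cast j =>
        have h : t i.1 < t j.1 := by simpa using hij
        simp only [Fin.snoc_castSucc, Fin.coe_castSucc]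
        exact hvM i j h

noncomputable def chainVec (d : X → X → ℝ) (x y : X) (r : ℝ) (t : ℕ → ℝ)
    (hrefl : ∀ a, d a a = 0)
    (htri : ∀ a b c, d a c ≤ d a b + d b c)
    (hd0 : ∀ a b, 0 ≤ d a b)
    (hlsc : LowerSemicontinuous (fun p : X × X => d p.1 p.2))
    (hr0 : 0 < r) (hrd : r < d x y)
    (ht0 : t 0 = 0) (ht1 : t 1 = 1)
    (htn : ∀ k, 0 < t (k + 2) ∧ t (k + 2) < 1) :
    ∀ k : ℕ, {v : Fin (k + 2) → Set X // Chain d x y r t (k + 2) v}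
  | 0 => ⟨_, (chain_base d x y r t hrefl hlsc hr0 hrd ht0 ht1).choose_spec⟩
  | (k + 1) =>
    ⟨_, (chain_extend d x y r t hrefl htri hd0 hlsc hr0 ht0 ht1 (k + 2) (by omega)
        (htn k).1 (htn k).2
        (chainVec d x y r t hrefl htri hd0 hlsc hr0 hrd ht0 ht1 htn k).1
        (chainVec d x y r t hrefl htri hd0 hlsc hr0 hrd ht0 ht1 htn k).2).choose_spec⟩

lemma chain_global (d : X → X → ℝ) (x y : X) (r : ℝ) (t : ℕ → ℝ)
    (hrefl : ∀ a, d a a = 0)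
    (htri : ∀ a b c, d a c ≤ d a b + d b c)
    (hd0 : ∀ a b, 0 ≤ d a b)
    (hlsc : LowerSemicontinuous (fun p : X × X => d p.1 p.2))
    (hr0 : 0 < r) (hrd : r < d x y)
    (ht0 : t 0 = 0) (ht1 : t 1 = 1)
    (htn : ∀ k, 0 < t (k + 2) ∧ t (k + 2) < 1) :
    ∃ u : ℕ → Set X, (∀ i, IsOpen (u i)) ∧ (∀ i, x ∈ u i) ∧ (∀ i, y ∉ u i) ∧
      (∀ i j : ℕ, t i < t j → closure (u i) ⊆ u j) ∧
      (∀ i j : ℕ, t i < t j → ∀ a ∈ closure (u i), ∀ b, b ∉ u j →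
        r * (t j - t i) < d a b) := by
  set W := chainVec d x y r t hrefl htri hd0 hlsc hr0 hrd ht0 ht1 htn with hW
  have hcons : ∀ k (j : ℕ) (h1 : j < k + 2) (h2 : j < k + 3),
      (W (k + 1)).1 ⟨j, h2⟩ = (W k).1 ⟨j, h1⟩ := by
    intro k j h1 h2
    have heq : (⟨j, h2⟩ : Fin (k + 3)) = Fin.castSucc ⟨j, h1⟩ := rfl
    rw [heq, hW]
    simp only [chainVec]
    rw [Fin.snoc_castSucc]
  set u : ℕ → Set X := fun j => (W j).1 ⟨j, by omega⟩ with hu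
  have huc : ∀ k (j : ℕ) (h : j < k + 2), (W k).1 ⟨j, h⟩ = u j := by
    intro k
    induction k with
    | zero =>
      intro j h
      interval_cases j
      · rfl
      · exact (hcons 0 1 (by omega) (by omega)).symm
    | succ k ih =>
      intro j h
      rcases Nat.lt_or_ge j (k + 2) with h' | h'
      · rw [hcons k j h' h, ih j h']
      · have hj : j = k + 2 := by omega
        subst hj
        exact (hcons (k + 1) (k + 2) (by omega) (by omega)).symm
  refine ⟨u, ?_, ?_, ?_, ?_, ?_⟩
  · intro i
    have h := (W i).2.1 ⟨i, by omega⟩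
    rwa [huc i i (by omega)] at h
  · intro i
    have h := (W i).2.2.1 ⟨i, by omega⟩
    rwa [huc i i (by omega)] at h
  · intro i
    have h := (W i).2.2.2.1 ⟨i, by omega⟩
    rwa [huc i i (by omega)] at h
  · intro i j hij
    have h := (W (i + j)).2.2.2.2.1 ⟨i, by omega⟩ ⟨j, by omega⟩ hij
    rwa [huc (i + j) i (by omega), huc (i + j) j (by omega)] at h
  · intro i j hij
    have h := (W (i + j)).2.2.2.2.2 ⟨i, by omega⟩ ⟨j, by omega⟩ hij
    rwa [huc (i + j) i (by omega), huc (i + j) j (by omega)] at h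

lemma key (d : X → X → ℝ) (x y : X)
    (hrefl : ∀ a, d a a = 0)
    (hsymm : ∀ a b, d a b = d b a)
    (htri : ∀ a b c, d a c ≤ d a b + d b c)
    (hlsc : LowerSemicontinuous (fun p : X × X => d p.1 p.2))
    (r : ℝ) (hr0 : 0 < r) (hrd : r < d x y) :
    ∃ f : X → ℝ, Continuous f ∧ (∀ a b, |f a - f b| ≤ d a b) ∧ r ≤ |f x - f y| := by
  classical
  have hd0 : ∀ a b, 0 ≤ d a b := by
    intro a b
    have h1 := htri a b a
    have h2 := hrefl a
    have h3 := hsymm a b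
    linarith
  -- a dense sequence of levels in [0,1]
  obtain ⟨e, he⟩ := exists_surjective_nat ℚ
  set t : ℕ → ℝ := fun n =>
    match n with
    | 0 => 0
    | 1 => 1
    | (k + 2) => if 0 < ((e k : ℚ) : ℝ) ∧ ((e k : ℚ) : ℝ) < 1 then ((e k : ℚ) : ℝ) else 1/2
    with ht
  have ht0 : t 0 = 0 := rfl
  have ht1 : t 1 = 1 := rfl
  have htval : ∀ k, t (k + 2) =
      if 0 < ((e k : ℚ) : ℝ) ∧ ((e k : ℚ) : ℝ) < 1 then ((e k : ℚ) : ℝ) else 1/2 :=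
    fun k => rfl
  have htn : ∀ k, 0 < t (k + 2) ∧ t (k + 2) < 1 := by
    intro k
    rw [htval]
    split_ifs with h
    · exact h
    · norm_num
  have htmem : ∀ k, 0 ≤ t k ∧ t k ≤ 1 := by
    intro k
    match k with
    | 0 => norm_num [ht0]
    | 1 => norm_num [ht1]
    | (k + 2) => exact ⟨(htn k).1.le, (htn k).2.le⟩
  have hdense : ∀ p q : ℝ, 0 ≤ p → q ≤ 1 → p < q → ∃ k, p < t k ∧ t k < q := by
    intro p q hp hq hpq
    obtain ⟨s, hs1, hs2⟩ := exists_rat_btwn hpq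
    obtain ⟨k, rfl⟩ := he s
    have h0 : 0 < ((e k : ℚ) : ℝ) := lt_of_le_of_lt hp hs1
    have h1 : ((e k : ℚ) : ℝ) < 1 := lt_of_lt_of_le hs2 hq
    refine ⟨k + 2, ?_, ?_⟩
    · rw [htval, if_pos ⟨h0, h1⟩]
      exact hs1
    · rw [htval, if_pos ⟨h0, h1⟩]
      exact hs2
  obtain ⟨u, hOpen, hxu, hyu, hT, hM⟩ :=
    chain_global d x y r t hrefl htri hd0 hlsc hr0 hrd ht0 ht1 htn
  -- the limit function
  set A : X → Set ℝ := fun z => insert (1 : ℝ) {s | ∃ n, t n = s ∧ z ∈ u n} with hA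
  set f : X → ℝ := fun z => sInf (A z) with hf
  have hAne : ∀ z, (A z).Nonempty := fun z => ⟨1, mem_insert _ _⟩
  have hAbdd : ∀ z, BddBelow (A z) := by
    intro z
    refine ⟨0, ?_⟩
    rintro s (rfl | ⟨n, rfl, _⟩)
    · norm_num
    · exact (htmem n).1
  have hf_le : ∀ z n, z ∈ u n → f z ≤ t n := fun z n h =>
    csInf_le (hAbdd z) (Or.inr ⟨n, rfl, h⟩)
  have hf0 : ∀ z, 0 ≤ f z := by
    intro z
    apply le_csInf (hAne z)
    rintro s (rfl | ⟨n, rfl, _⟩)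
    · norm_num
    · exact (htmem n).1
  have hf1 : ∀ z, f z ≤ 1 := fun z => csInf_le (hAbdd z) (mem_insert _ _)
  have hfx : f x = 0 := le_antisymm (by simpa [ht0] using hf_le x 0 (hxu 0)) (hf0 x)
  have hfy : f y = 1 := by
    refine le_antisymm (hf1 y) ?_
    apply le_csInf (hAne y)
    rintro s (rfl | ⟨n, rfl, hn⟩)
    · exact le_rfl
    · exact absurd hn (hyu n)
  have hlow : ∀ z c, f z < c → c ≤ 1 → ∃ n, t n < c ∧ z ∈ u n := by
    intro z c h hc1
    obtain ⟨s, hs, hsc⟩ := exists_lt_of_csInf_lt (hAne z) h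
    rcases hs with rfl | ⟨n, rfl, hn⟩
    · linarith
    · exact ⟨n, hsc, hn⟩
  -- Lipschitz estimate
  have hLip : ∀ a b : X, r * (f a - f b) ≤ d a b := by
    intro a b
    rcases le_or_gt (f a) (f b) with h | h
    · have : r * (f a - f b) ≤ 0 := by nlinarith
      linarith [hd0 a b]
    · have hstep : ∀ ε : ℝ, 0 < ε → r * (f a - f b) ≤ d a b + 3 * r * ε := by
        intro ε hε
        set δ := min ε ((f a - f b) / 3) with hδdef
        have hδ0 : 0 < δ := lt_min hε (by linarith)
        have hδ3 : 3 * δ ≤ f a - f b := by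
          have := min_le_right ε ((f a - f b) / 3)
          linarith [this]
        have hδε : δ ≤ ε := min_le_left _ _
        set p := f b + δ with hp
        set q := f a - δ with hq
        have hq1 : q < 1 := by
          have := hf1 a
          simp only [hq]
          linarith
        have hpq : p ≤ q - δ := by simp only [hp, hq]; linarith
        obtain ⟨n, htn_lt, hbn⟩ := hlow b p (by simp only [hp]; linarith) (by linarith)
        have hmax0 : 0 ≤ max (t n) (q - δ) := le_max_of_le_left (htmem n).1
        have hmaxq : max (t n) (q - δ) < q := max_lt (by linarith) (by linarith)
        obtain ⟨k, hk1, hk2⟩ := hdense (max (t n) (q - δ)) q hmax0 hq1.le hmaxq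
        have hak : a ∉ u k := by
          intro hmem
          have := hf_le a k hmem
          simp only [hq] at hk2
          linarith
        have hnk : t n < t k := lt_of_le_of_lt (le_max_left _ _) hk1
        have hsep := hM n k hnk b (subset_closure hbn) a hak
        rw [hsymm b a] at hsep
        have h1 : q - δ < t k := lt_of_le_of_lt (le_max_right _ _) hk1
        simp only [hp, hq] at htn_lt h1
        nlinarith
      by_contra hcon
      push_neg at hcon
      have hpos : 0 < r * (f a - f b) - d a b := by linarith
      have hε : 0 < (r * (f a - f b) - d a b) / (6 * r) := by positivity
      have := hstep _ hε
      have harith : 3 * r * ((r * (f a - f b) - d a b) / (6 * r)) =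
          (r * (f a - f b) - d a b) / 2 := by
        field_simp
        ring
      rw [harith] at this
      linarith
  -- continuity
  have hcont : Continuous f := by
    rw [continuous_iff_lower_upperSemicontinuous]
    constructor
    · rw [lowerSemicontinuous_iff_isOpen_preimage]
      intro c
      rw [isOpen_iff_forall_mem_open]
      intro z hz
      simp only [mem_preimage, mem_Ioi] at hz
      rcases lt_or_ge c 0 with hc | hc
      · exact ⟨univ, fun z' _ => lt_of_lt_of_le hc (hf0 z'), isOpen_univ, mem_univ z⟩
      · have hfz1 : f z ≤ 1 := hf1 z
        set w1 := c + (f z - c) / 3 with hw1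
        obtain ⟨n, hn1, hn2⟩ := hdense c w1 hc (by simp only [hw1]; linarith)
          (by simp only [hw1]; linarith)
        obtain ⟨k, hk1, hk2⟩ := hdense w1 (f z) (by simp only [hw1]; linarith) hfz1
          (by simp only [hw1]; linarith)
        have hnk : t n < t k := by linarith
        refine ⟨(closure (u n))ᶜ, ?_, isClosed_closure.isOpen_compl, ?_⟩
        · intro z' hz'
          simp only [mem_preimage, mem_Ioi]
          have htle : t n ≤ f z' := by
            apply le_csInf (hAne z')
            rintro s (rfl | ⟨j, rfl, hj⟩)
            · exact (htmem n).2
            · by_contra hlt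
              push_neg at hlt
              exact hz' (subset_closure (hT j n hlt (subset_closure hj)))
          linarith
        · intro hmem
          have : f z ≤ t k := hf_le z k (hT n k hnk hmem)
          linarith
    · rw [upperSemicontinuous_iff_isOpen_preimage]
      intro c
      rw [isOpen_iff_forall_mem_open]
      intro z hz
      simp only [mem_preimage, mem_Iio] at hz
      rcases le_or_gt c 1 with hc | hc
      · obtain ⟨n, hn1, hn2⟩ := hlow z c hz hc
        refine ⟨u n, ?_, hOpen n, hn2⟩
        intro z' hz'
        simp only [mem_preimage, mem_Iio]
        exact lt_of_le_of_lt (hf_le z' n hz') hn1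
      · exact ⟨univ, fun z' _ => lt_of_le_of_lt (hf1 z') hc, isOpen_univ, mem_univ z⟩
  refine ⟨fun z => r * f z, continuous_const.mul hcont, ?_, ?_⟩
  · intro a b
    rw [abs_sub_le_iff]
    constructor
    · calc r * f a - r * f b = r * (f a - f b) := by ring
        _ ≤ d a b := hLip a b
    · calc r * f b - r * f a = r * (f b - f a) := by ring
        _ ≤ d b a := hLip b a
        _ = d a b := (hsymm a b).symm
  · show r ≤ |r * f x - r * f y|
    rw [hfx, hfy, mul_zero, mul_one, zero_sub, abs_neg, abs_of_nonneg hr0.le]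

end TopometricAux

theorem topometric_lipschitz_representation
    {X : Type*} [TopologicalSpace X] [CompactSpace X] [T2Space X]
    (d : X → X → ℝ)
    (hrefl : ∀ x, d x x = 0)
    (hpos : ∀ x y, d x y = 0 → x = y)
    (hsymm : ∀ x y, d x y = d y x)
    (htri : ∀ x y z, d x z ≤ d x y + d y z)
    (hlsc : LowerSemicontinuous (fun p : X × X => d p.1 p.2))
    (hrefines : ∀ U : Set X, IsOpen U → ∀ x ∈ U, ∃ ε > 0, {y | d x y < ε} ⊆ U) :
    ∀ x y : X, d x y =
      sSup {r : ℝ | ∃ f : X → ℝ, Continuous f ∧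
        (∀ a b : X, |f a - f b| ≤ d a b) ∧ r = |f x - f y|} := by
  intro x y
  have hd0 : ∀ a b, 0 ≤ d a b := by
    intro a b
    have h1 := htri a b a
    have h2 := hrefl a
    have h3 := hsymm a b
    linarith
  set S := {r : ℝ | ∃ f : X → ℝ, Continuous f ∧
      (∀ a b : X, |f a - f b| ≤ d a b) ∧ r = |f x - f y|} with hS
  have h0S : (0 : ℝ) ∈ S := by
    refine ⟨fun _ => 0, continuous_const, fun a b => by simpa using hd0 a b, by norm_num⟩
  have hne : S.Nonempty := ⟨0, h0S⟩
  have hbdd : BddAbove S := by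
    refine ⟨d x y, ?_⟩
    rintro s ⟨f, hf, hlip, rfl⟩
    exact hlip x y
  refine le_antisymm ?_ (csSup_le hne ?_)
  · by_contra hcon
    push_neg at hcon
    have hsup0 : 0 ≤ sSup S := le_csSup hbdd h0S
    set r := (sSup S + d x y) / 2 with hr
    have hr0 : 0 < r := by
      simp only [hr]
      linarith
    obtain ⟨f, hf, hlip, hval⟩ :=
      TopometricAux.key d x y hrefl hsymm htri hlsc r hr0 (by simp only [hr]; linarith)
    have hmem : |f x - f y| ∈ S := ⟨f, hf, hlip, rfl⟩
    have hle := le_csSup hbdd hmem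
    simp only [hr] at hval hle
    linarith
  · rintro s ⟨f, hf, hlip, rfl⟩
    exact hlip x y
end
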